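/- The element x satisfies the μ-permissibility condition for E_6: for every v ∈ C (the closure of the base alcove) one has x(v) − v ∈ P_μ, where x : V → V is x(v) = w_2(μ + w_1^{-1}(v)), C = {v ∈ V : ⟨α_i, v⟩ ≥ 0 for i = 1,…,6 and ⟨α̃, v⟩ ≤ 1} with α̃ = α_1+2α_2+2α_3+3α_4+2α_5+α_6, and P_μ is the convex hull of the 27-element set O consisting of μ, the vectors (1/6)(e_8'−e_7'−e_6') − (1/2)Σ_{i=1}^{5}(−1)^{δ(i)}e_i' with Σ_{i=1}^{5}δ(i) even, and the vectors −(1/3)(e_8'−e_7'−e_6') ± e_i' (1 ≤ i ≤ 5). -/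
import Mathlib


/-!
Statement 0: μ = (2/3)(e₈'−e₇'−e₆') is a dominant minuscule coweight for E₆.
We work in `Fin 8 → ℝ` (coordinates with respect to the standard basis e₁,…,e₈,
resp. the dual basis e₁',…,e₈'); the pairing is the standard dot product.
Indices are 0-based: `k : Fin 8` corresponds to e_{k+1}.
-/

/-- The pairing ⟨α, v⟩ coming from ⟨e_i, e_j'⟩ = δ_{ij}. -/
def pairing (α v : Fin 8 → ℝ) : ℝ := ∑ k, α k * v k

/-- The root system of type E₆: the 72 vectors ±e_i±e_j (1 ≤ i < j ≤ 5) and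
±(1/2)(e₈−e₇−e₆+Σ_{i=1}^{5}(−1)^{δ(i)}e_i) with Σδ(i) even. -/
def E6Roots : Set (Fin 8 → ℝ) :=
  {α | (∃ i j : Fin 5, i < j ∧ ∃ ε₁ ε₂ : ℝ, (ε₁ = 1 ∨ ε₁ = -1) ∧ (ε₂ = 1 ∨ ε₂ = -1) ∧
          α = fun k : Fin 8 =>
            ε₁ * (if (k : ℕ) = (i : ℕ) then 1 else 0) +
            ε₂ * (if (k : ℕ) = (j : ℕ) then 1 else 0))
    ∨ (∃ ε : ℝ, (ε = 1 ∨ ε = -1) ∧ ∃ δ : Fin 5 → Bool,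
          Even (Finset.filter (fun i => δ i = true) Finset.univ).card ∧
          α = fun k : Fin 8 =>
            ε * (if hk : (k : ℕ) < 5 then (if δ ⟨k, hk⟩ then -(1/2) else 1/2)
                 else if (k : ℕ) = 7 then 1/2 else -(1/2)))}

/-- The simple roots α₁, …, α₆ of E₆ (0-based indexing: `simpleE6 i` is α_{i+1}). -/
noncomputable def simpleE6 : Fin 6 → (Fin 8 → ℝ) :=
  ![![1/2, -(1/2), -(1/2), -(1/2), -(1/2), -(1/2), -(1/2), 1/2],
    ![1, 1, 0, 0, 0, 0, 0, 0],
    ![-1, 1, 0, 0, 0, 0, 0, 0],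
    ![0, -1, 1, 0, 0, 0, 0, 0],
    ![0, 0, -1, 1, 0, 0, 0, 0],
    ![0, 0, 0, -1, 1, 0, 0, 0]]

/-- μ = (2/3)(e₈'−e₇'−e₆'). -/
noncomputable def muE6 : Fin 8 → ℝ := ![0, 0, 0, 0, 0, -(2/3), -(2/3), 2/3]


/-- The simple reflection s_i : V → V, s_i(v) = v − ⟨α_i, v⟩α_i^∨, where the coroot α_i^∨
has the same coefficients as α_i (written in the dual basis e₁',…,e₈'). -/
noncomputable def sE6 (i : Fin 6) : (Fin 8 → ℝ) → (Fin 8 → ℝ) :=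
  fun v => v - pairing (simpleE6 i) v • simpleE6 i

/-- w₁ = s₂s₄s₅s₆s₃s₄s₅s₂s₄s₃s₁ as a map V → V (0-based indices). -/
noncomputable def w1E6 : (Fin 8 → ℝ) → (Fin 8 → ℝ) :=
  sE6 1 ∘ sE6 3 ∘ sE6 4 ∘ sE6 5 ∘ sE6 2 ∘ sE6 3 ∘ sE6 4 ∘ sE6 1 ∘ sE6 3 ∘ sE6 2 ∘ sE6 0

/-- w₂ = s₄s₅s₆s₂s₄s₅ as a map V → V (0-based indices). -/
noncomputable def w2E6 : (Fin 8 → ℝ) → (Fin 8 → ℝ) :=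
  sE6 3 ∘ sE6 4 ∘ sE6 5 ∘ sE6 1 ∘ sE6 3 ∘ sE6 4

/-- The 27-element set O: μ itself, the 16 vectors
(1/6)(e₈'−e₇'−e₆') − (1/2)Σ(−1)^{δ(i)}e_i' with Σδ(i) even, and the 10 vectors
−(1/3)(e₈'−e₇'−e₆') ± e_i' (1 ≤ i ≤ 5). -/
def OE6 : Set (Fin 8 → ℝ) :=
  {muE6}
  ∪ {v | ∃ δ : Fin 5 → Bool, Even (Finset.filter (fun i => δ i = true) Finset.univ).card ∧
      v = fun k : Fin 8 =>
        if hk : (k : ℕ) < 5 then -(1/2) * (if δ ⟨k, hk⟩ then -1 else 1)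
        else if (k : ℕ) = 7 then 1/6 else -(1/6)}
  ∪ {v | ∃ i : Fin 5, ∃ ε : ℝ, (ε = 1 ∨ ε = -1) ∧
      v = fun k : Fin 8 =>
        if (k : ℕ) = (i : ℕ) then ε
        else if (k : ℕ) = 5 ∨ (k : ℕ) = 6 then 1/3
        else if (k : ℕ) = 7 then -(1/3) else 0}

/-- The highest root α̃ = α₁+2α₂+2α₃+3α₄+2α₅+α₆ of E₆. -/
noncomputable def highestE6 : Fin 8 → ℝ :=
  simpleE6 0 + (2 : ℝ) • simpleE6 1 + (2 : ℝ) • simpleE6 2 + (3 : ℝ) • simpleE6 3 +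
    (2 : ℝ) • simpleE6 4 + simpleE6 5

/-- The closure of the base alcove:
C = {v ∈ V : ⟨α_i, v⟩ ≥ 0 for i = 1,…,6 and ⟨α̃, v⟩ ≤ 1}. -/
def alcoveE6 : Set (Fin 8 → ℝ) :=
  {v | (v 5 = v 6 ∧ v 6 = -v 7) ∧ (∀ i : Fin 6, 0 ≤ pairing (simpleE6 i) v) ∧
    pairing highestE6 v ≤ 1}

section VecLemmas
variable {α : Type*}
lemma v5_0 (a0 a1 a2 a3 a4 : α) : ![a0,a1,a2,a3,a4] (0 : Fin 5) = a0 := rfl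
lemma v5m_0 (a0 a1 a2 a3 a4 : α) (h : 0 < 5) : ![a0,a1,a2,a3,a4] (⟨0, h⟩ : Fin 5) = a0 := rfl
lemma v5_1 (a0 a1 a2 a3 a4 : α) : ![a0,a1,a2,a3,a4] (1 : Fin 5) = a1 := rfl
lemma v5m_1 (a0 a1 a2 a3 a4 : α) (h : 1 < 5) : ![a0,a1,a2,a3,a4] (⟨1, h⟩ : Fin 5) = a1 := rfl
lemma v5_2 (a0 a1 a2 a3 a4 : α) : ![a0,a1,a2,a3,a4] (2 : Fin 5) = a2 := rfl
lemma v5m_2 (a0 a1 a2 a3 a4 : α) (h : 2 < 5) : ![a0,a1,a2,a3,a4] (⟨2, h⟩ : Fin 5) = a2 := rfl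
lemma v5_3 (a0 a1 a2 a3 a4 : α) : ![a0,a1,a2,a3,a4] (3 : Fin 5) = a3 := rfl
lemma v5m_3 (a0 a1 a2 a3 a4 : α) (h : 3 < 5) : ![a0,a1,a2,a3,a4] (⟨3, h⟩ : Fin 5) = a3 := rfl
lemma v5_4 (a0 a1 a2 a3 a4 : α) : ![a0,a1,a2,a3,a4] (4 : Fin 5) = a4 := rfl
lemma v5m_4 (a0 a1 a2 a3 a4 : α) (h : 4 < 5) : ![a0,a1,a2,a3,a4] (⟨4, h⟩ : Fin 5) = a4 := rfl
lemma v6_0 (a0 a1 a2 a3 a4 a5 : α) : ![a0,a1,a2,a3,a4,a5] (0 : Fin 6) = a0 := rfl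
lemma v6m_0 (a0 a1 a2 a3 a4 a5 : α) (h : 0 < 6) : ![a0,a1,a2,a3,a4,a5] (⟨0, h⟩ : Fin 6) = a0 := rfl
lemma v6_1 (a0 a1 a2 a3 a4 a5 : α) : ![a0,a1,a2,a3,a4,a5] (1 : Fin 6) = a1 := rfl
lemma v6m_1 (a0 a1 a2 a3 a4 a5 : α) (h : 1 < 6) : ![a0,a1,a2,a3,a4,a5] (⟨1, h⟩ : Fin 6) = a1 := rfl
lemma v6_2 (a0 a1 a2 a3 a4 a5 : α) : ![a0,a1,a2,a3,a4,a5] (2 : Fin 6) = a2 := rfl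
lemma v6m_2 (a0 a1 a2 a3 a4 a5 : α) (h : 2 < 6) : ![a0,a1,a2,a3,a4,a5] (⟨2, h⟩ : Fin 6) = a2 := rfl
lemma v6_3 (a0 a1 a2 a3 a4 a5 : α) : ![a0,a1,a2,a3,a4,a5] (3 : Fin 6) = a3 := rfl
lemma v6m_3 (a0 a1 a2 a3 a4 a5 : α) (h : 3 < 6) : ![a0,a1,a2,a3,a4,a5] (⟨3, h⟩ : Fin 6) = a3 := rfl
lemma v6_4 (a0 a1 a2 a3 a4 a5 : α) : ![a0,a1,a2,a3,a4,a5] (4 : Fin 6) = a4 := rfl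
lemma v6m_4 (a0 a1 a2 a3 a4 a5 : α) (h : 4 < 6) : ![a0,a1,a2,a3,a4,a5] (⟨4, h⟩ : Fin 6) = a4 := rfl
lemma v6_5 (a0 a1 a2 a3 a4 a5 : α) : ![a0,a1,a2,a3,a4,a5] (5 : Fin 6) = a5 := rfl
lemma v6m_5 (a0 a1 a2 a3 a4 a5 : α) (h : 5 < 6) : ![a0,a1,a2,a3,a4,a5] (⟨5, h⟩ : Fin 6) = a5 := rfl
lemma v7_0 (a0 a1 a2 a3 a4 a5 a6 : α) : ![a0,a1,a2,a3,a4,a5,a6] (0 : Fin 7) = a0 := rfl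
lemma v7m_0 (a0 a1 a2 a3 a4 a5 a6 : α) (h : 0 < 7) : ![a0,a1,a2,a3,a4,a5,a6] (⟨0, h⟩ : Fin 7) = a0 := rfl
lemma v7_1 (a0 a1 a2 a3 a4 a5 a6 : α) : ![a0,a1,a2,a3,a4,a5,a6] (1 : Fin 7) = a1 := rfl
lemma v7m_1 (a0 a1 a2 a3 a4 a5 a6 : α) (h : 1 < 7) : ![a0,a1,a2,a3,a4,a5,a6] (⟨1, h⟩ : Fin 7) = a1 := rfl
lemma v7_2 (a0 a1 a2 a3 a4 a5 a6 : α) : ![a0,a1,a2,a3,a4,a5,a6] (2 : Fin 7) = a2 := rfl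
lemma v7m_2 (a0 a1 a2 a3 a4 a5 a6 : α) (h : 2 < 7) : ![a0,a1,a2,a3,a4,a5,a6] (⟨2, h⟩ : Fin 7) = a2 := rfl
lemma v7_3 (a0 a1 a2 a3 a4 a5 a6 : α) : ![a0,a1,a2,a3,a4,a5,a6] (3 : Fin 7) = a3 := rfl
lemma v7m_3 (a0 a1 a2 a3 a4 a5 a6 : α) (h : 3 < 7) : ![a0,a1,a2,a3,a4,a5,a6] (⟨3, h⟩ : Fin 7) = a3 := rfl
lemma v7_4 (a0 a1 a2 a3 a4 a5 a6 : α) : ![a0,a1,a2,a3,a4,a5,a6] (4 : Fin 7) = a4 := rfl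
lemma v7m_4 (a0 a1 a2 a3 a4 a5 a6 : α) (h : 4 < 7) : ![a0,a1,a2,a3,a4,a5,a6] (⟨4, h⟩ : Fin 7) = a4 := rfl
lemma v7_5 (a0 a1 a2 a3 a4 a5 a6 : α) : ![a0,a1,a2,a3,a4,a5,a6] (5 : Fin 7) = a5 := rfl
lemma v7m_5 (a0 a1 a2 a3 a4 a5 a6 : α) (h : 5 < 7) : ![a0,a1,a2,a3,a4,a5,a6] (⟨5, h⟩ : Fin 7) = a5 := rfl
lemma v7_6 (a0 a1 a2 a3 a4 a5 a6 : α) : ![a0,a1,a2,a3,a4,a5,a6] (6 : Fin 7) = a6 := rfl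
lemma v7m_6 (a0 a1 a2 a3 a4 a5 a6 : α) (h : 6 < 7) : ![a0,a1,a2,a3,a4,a5,a6] (⟨6, h⟩ : Fin 7) = a6 := rfl
lemma v8_0 (a0 a1 a2 a3 a4 a5 a6 a7 : α) : ![a0,a1,a2,a3,a4,a5,a6,a7] (0 : Fin 8) = a0 := rfl
lemma v8m_0 (a0 a1 a2 a3 a4 a5 a6 a7 : α) (h : 0 < 8) : ![a0,a1,a2,a3,a4,a5,a6,a7] (⟨0, h⟩ : Fin 8) = a0 := rfl
lemma v8_1 (a0 a1 a2 a3 a4 a5 a6 a7 : α) : ![a0,a1,a2,a3,a4,a5,a6,a7] (1 : Fin 8) = a1 := rfl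
lemma v8m_1 (a0 a1 a2 a3 a4 a5 a6 a7 : α) (h : 1 < 8) : ![a0,a1,a2,a3,a4,a5,a6,a7] (⟨1, h⟩ : Fin 8) = a1 := rfl
lemma v8_2 (a0 a1 a2 a3 a4 a5 a6 a7 : α) : ![a0,a1,a2,a3,a4,a5,a6,a7] (2 : Fin 8) = a2 := rfl
lemma v8m_2 (a0 a1 a2 a3 a4 a5 a6 a7 : α) (h : 2 < 8) : ![a0,a1,a2,a3,a4,a5,a6,a7] (⟨2, h⟩ : Fin 8) = a2 := rfl
lemma v8_3 (a0 a1 a2 a3 a4 a5 a6 a7 : α) : ![a0,a1,a2,a3,a4,a5,a6,a7] (3 : Fin 8) = a3 := rfl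
lemma v8m_3 (a0 a1 a2 a3 a4 a5 a6 a7 : α) (h : 3 < 8) : ![a0,a1,a2,a3,a4,a5,a6,a7] (⟨3, h⟩ : Fin 8) = a3 := rfl
lemma v8_4 (a0 a1 a2 a3 a4 a5 a6 a7 : α) : ![a0,a1,a2,a3,a4,a5,a6,a7] (4 : Fin 8) = a4 := rfl
lemma v8m_4 (a0 a1 a2 a3 a4 a5 a6 a7 : α) (h : 4 < 8) : ![a0,a1,a2,a3,a4,a5,a6,a7] (⟨4, h⟩ : Fin 8) = a4 := rfl
lemma v8_5 (a0 a1 a2 a3 a4 a5 a6 a7 : α) : ![a0,a1,a2,a3,a4,a5,a6,a7] (5 : Fin 8) = a5 := rfl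
lemma v8m_5 (a0 a1 a2 a3 a4 a5 a6 a7 : α) (h : 5 < 8) : ![a0,a1,a2,a3,a4,a5,a6,a7] (⟨5, h⟩ : Fin 8) = a5 := rfl
lemma v8_6 (a0 a1 a2 a3 a4 a5 a6 a7 : α) : ![a0,a1,a2,a3,a4,a5,a6,a7] (6 : Fin 8) = a6 := rfl
lemma v8m_6 (a0 a1 a2 a3 a4 a5 a6 a7 : α) (h : 6 < 8) : ![a0,a1,a2,a3,a4,a5,a6,a7] (⟨6, h⟩ : Fin 8) = a6 := rfl
lemma v8_7 (a0 a1 a2 a3 a4 a5 a6 a7 : α) : ![a0,a1,a2,a3,a4,a5,a6,a7] (7 : Fin 8) = a7 := rfl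
lemma v8m_7 (a0 a1 a2 a3 a4 a5 a6 a7 : α) (h : 7 < 8) : ![a0,a1,a2,a3,a4,a5,a6,a7] (⟨7, h⟩ : Fin 8) = a7 := rfl
end VecLemmas

lemma funext8 {f g : Fin 8 → ℝ} (h0 : f 0 = g 0) (h1 : f 1 = g 1) (h2 : f 2 = g 2)
    (h3 : f 3 = g 3) (h4 : f 4 = g 4) (h5 : f 5 = g 5) (h6 : f 6 = g 6) (h7 : f 7 = g 7) :
    f = g := by
  funext k; fin_cases k <;> assumption

lemma pairing_sub (a v w : Fin 8 → ℝ) : pairing a (v - w) = pairing a v - pairing a w := by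
  simp [pairing, mul_sub, Finset.sum_sub_distrib]

lemma pairing_smul (a : Fin 8 → ℝ) (c : ℝ) (w : Fin 8 → ℝ) :
    pairing a (c • w) = c * pairing a w := by
  simp only [pairing, Pi.smul_apply, smul_eq_mul, Finset.mul_sum]
  exact Finset.sum_congr rfl fun k _ => by ring

lemma pairing_self (i : Fin 6) : pairing (simpleE6 i) (simpleE6 i) = 2 := by
  fin_cases i <;>
    · simp only [pairing, simpleE6, Fin.sum_univ_eight, v5_0, v5_1, v5_2, v5_3, v5_4, v6_0, v6_1, v6_2, v6_3, v6_4, v6_5, v7_0, v7_1, v7_2, v7_3, v7_4, v7_5, v7_6, v8_0, v8_1, v8_2, v8_3, v8_4, v8_5, v8_6, v8_7, v5m_0, v5m_1, v5m_2, v5m_3, v5m_4, v6m_0, v6m_1, v6m_2, v6m_3, v6m_4, v6m_5, v7m_0, v7m_1, v7m_2, v7m_3, v7m_4, v7m_5, v7m_6, v8m_0, v8m_1, v8m_2, v8m_3, v8m_4, v8m_5, v8m_6, v8m_7]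
      norm_num

lemma sE6_invol (i : Fin 6) (v : Fin 8 → ℝ) : sE6 i (sE6 i v) = v := by
  simp only [sE6, pairing_sub, pairing_smul, pairing_self]
  funext k
  simp only [Pi.sub_apply, Pi.smul_apply, smul_eq_mul]
  ring

noncomputable def w1revE6 : (Fin 8 → ℝ) → (Fin 8 → ℝ) :=
  sE6 0 ∘ sE6 2 ∘ sE6 3 ∘ sE6 1 ∘ sE6 4 ∘ sE6 3 ∘ sE6 2 ∘ sE6 5 ∘ sE6 4 ∘ sE6 3 ∘ sE6 1

lemma w1_rightinv (v : Fin 8 → ℝ) : w1E6 (w1revE6 v) = v := by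
  simp only [w1E6, w1revE6, Function.comp_apply, sE6_invol]

noncomputable def gE1 : (Fin 8 → ℝ) → (Fin 8 → ℝ) := fun v => ![(-1:ℝ)*v 1, (-1:ℝ)*v 0, (1:ℝ)*v 2, (1:ℝ)*v 3, (1:ℝ)*v 4, (1:ℝ)*v 5, (1:ℝ)*v 6, (1:ℝ)*v 7]
lemma gE1_spec (v : Fin 8 → ℝ) : sE6 1 v = gE1 v := by
  refine funext8 ?_ ?_ ?_ ?_ ?_ ?_ ?_ ?_ <;>
    simp only [gE1, sE6, pairing, simpleE6, Fin.sum_univ_eight, Pi.sub_apply, Pi.add_apply, Pi.smul_apply, smul_eq_mul, v5_0, v5_1, v5_2, v5_3, v5_4, v6_0, v6_1, v6_2, v6_3, v6_4, v6_5, v7_0, v7_1, v7_2, v7_3, v7_4, v7_5, v7_6, v8_0, v8_1, v8_2, v8_3, v8_4, v8_5, v8_6, v8_7, v5m_0, v5m_1, v5m_2, v5m_3, v5m_4, v6m_0, v6m_1, v6m_2, v6m_3, v6m_4, v6m_5, v7m_0, v7m_1, v7m_2, v7m_3, v7m_4, v7m_5, v7m_6, v8m_0, v8m_1, v8m_2,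 v8m_3, v8m_4, v8m_5, v8m_6, v8m_7] <;> ring

noncomputable def gE2 : (Fin 8 → ℝ) → (Fin 8 → ℝ) := fun v => ![(-1:ℝ)*v 1, (1:ℝ)*v 2, (-1:ℝ)*v 0, (1:ℝ)*v 3, (1:ℝ)*v 4, (1:ℝ)*v 5, (1:ℝ)*v 6, (1:ℝ)*v 7]
lemma gE2_spec (v : Fin 8 → ℝ) : sE6 3 (gE1 v) = gE2 v := by
  refine funext8 ?_ ?_ ?_ ?_ ?_ ?_ ?_ ?_ <;>
    simp only [gE2, gE1, sE6, pairing, simpleE6, Fin.sum_univ_eight, Pi.sub_apply, Pi.add_apply, Pi.smul_apply, smul_eq_mul, v5_0, v5_1, v5_2, v5_3, v5_4, v6_0, v6_1, v6_2, v6_3, v6_4, v6_5, v7_0, v7_1, v7_2, v7_3, v7_4, v7_5, v7_6, v8_0, v8_1, v8_2, v8_3, v8_4, v8_5, v8_6, v8_7, v5m_0, v5m_1, v5m_2, v5m_3, v5m_4, v6m_0, v6m_1, v6m_2, v6m_3, v6m_4, v6m_5, v7m_0, v7m_1, v7m_2, v7m_3, v7m_4, v7m_5, v7m_6, v8m_0,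 v8m_1, v8m_2, v8m_3, v8m_4, v8m_5, v8m_6, v8m_7] <;> ring

noncomputable def gE3 : (Fin 8 → ℝ) → (Fin 8 → ℝ) := fun v => ![(-1:ℝ)*v 1, (1:ℝ)*v 2, (1:ℝ)*v 3, (-1:ℝ)*v 0, (1:ℝ)*v 4, (1:ℝ)*v 5, (1:ℝ)*v 6, (1:ℝ)*v 7]
lemma gE3_spec (v : Fin 8 → ℝ) : sE6 4 (gE2 v) = gE3 v := by
  refine funext8 ?_ ?_ ?_ ?_ ?_ ?_ ?_ ?_ <;>
    simp only [gE3, gE2, sE6, pairing, simpleE6, Fin.sum_univ_eight, Pi.sub_apply, Pi.add_apply, Pi.smul_apply, smul_eq_mul, v5_0, v5_1, v5_2, v5_3, v5_4, v6_0, v6_1, v6_2, v6_3, v6_4, v6_5, v7_0, v7_1, v7_2, v7_3, v7_4, v7_5, v7_6, v8_0, v8_1, v8_2, v8_3, v8_4, v8_5, v8_6, v8_7, v5m_0, v5m_1, v5m_2, v5m_3, v5m_4, v6m_0, v6m_1, v6m_2, v6m_3, v6m_4, v6m_5, v7m_0, v7m_1, v7m_2, v7m_3, v7m_4, v7m_5,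 v7m_6, v8m_0, v8m_1, v8m_2, v8m_3, v8m_4, v8m_5, v8m_6, v8m_7] <;> ring

noncomputable def gE4 : (Fin 8 → ℝ) → (Fin 8 → ℝ) := fun v => ![(-1:ℝ)*v 1, (1:ℝ)*v 2, (1:ℝ)*v 3, (1:ℝ)*v 4, (-1:ℝ)*v 0, (1:ℝ)*v 5, (1:ℝ)*v 6, (1:ℝ)*v 7]
lemma gE4_spec (v : Fin 8 → ℝ) : sE6 5 (gE3 v) = gE4 v := by
  refine funext8 ?_ ?_ ?_ ?_ ?_ ?_ ?_ ?_ <;>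
    simp only [gE4, gE3, sE6, pairing, simpleE6, Fin.sum_univ_eight, Pi.sub_apply, Pi.add_apply, Pi.smul_apply, smul_eq_mul, v5_0, v5_1, v5_2, v5_3, v5_4, v6_0, v6_1, v6_2, v6_3, v6_4, v6_5, v7_0, v7_1, v7_2, v7_3, v7_4, v7_5, v7_6, v8_0, v8_1, v8_2, v8_3, v8_4, v8_5, v8_6, v8_7, v5m_0, v5m_1, v5m_2, v5m_3, v5m_4, v6m_0, v6m_1, v6m_2, v6m_3, v6m_4, v6m_5, v7m_0, v7m_1, v7m_2, v7m_3, v7m_4, v7m_5, v7m_6, v8m_0, v8m_1, v8m_2, v8m_3, v8m_4, v8m_5, v8m_6, v8m_7] <;> ring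

noncomputable def gE5 : (Fin 8 → ℝ) → (Fin 8 → ℝ) := fun v => ![(1:ℝ)*v 2, (-1:ℝ)*v 1, (1:ℝ)*v 3, (1:ℝ)*v 4, (-1:ℝ)*v 0, (1:ℝ)*v 5, (1:ℝ)*v 6, (1:ℝ)*v 7]
lemma gE5_spec (v : Fin 8 → ℝ) : sE6 2 (gE4 v) = gE5 v := by
  refine funext8 ?_ ?_ ?_ ?_ ?_ ?_ ?_ ?_ <;>
    simp only [gE5, gE4, sE6, pairing, simpleE6, Fin.sum_univ_eight, Pi.sub_apply, Pi.add_apply, Pi.smul_apply, smul_eq_mul, v5_0, v5_1, v5_2, v5_3, v5_4, v6_0, v6_1, v6_2, v6_3, v6_4, v6_5, v7_0, v7_1, v7_2, v7_3, v7_4, v7_5, v7_6, v8_0, v8_1, v8_2, v8_3, v8_4, v8_5, v8_6, v8_7, v5m_0, v5m_1, v5m_2, v5m_3, v5m_4, v6m_0, v6m_1, v6m_2, v6m_3, v6m_4, v6m_5, v7m_0, v7m_1, v7m_2, v7m_3, v7m_4, v7m_5, v7m_6, v8m_0, v8m_1, v8m_2, v8m_3, v8m_4, v8m_5, v8m_6,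 v8m_7] <;> ring

noncomputable def gE6 : (Fin 8 → ℝ) → (Fin 8 → ℝ) := fun v => ![(1:ℝ)*v 2, (1:ℝ)*v 3, (-1:ℝ)*v 1, (1:ℝ)*v 4, (-1:ℝ)*v 0, (1:ℝ)*v 5, (1:ℝ)*v 6, (1:ℝ)*v 7]
lemma gE6_spec (v : Fin 8 → ℝ) : sE6 3 (gE5 v) = gE6 v := by
  refine funext8 ?_ ?_ ?_ ?_ ?_ ?_ ?_ ?_ <;>
    simp only [gE6, gE5, sE6, pairing, simpleE6, Fin.sum_univ_eight, Pi.sub_apply, Pi.add_apply, Pi.smul_apply, smul_eq_mul, v5_0, v5_1, v5_2, v5_3, v5_4, v6_0, v6_1, v6_2, v6_3, v6_4, v6_5, v7_0, v7_1, v7_2, v7_3, v7_4, v7_5, v7_6, v8_0, v8_1, v8_2, v8_3, v8_4, v8_5, v8_6, v8_7, v5m_0, v5m_1, v5m_2, v5m_3, v5m_4, v6m_0, v6m_1, v6m_2, v6m_3, v6m_4, v6m_5, v7m_0, v7m_1, v7m_2, v7m_3, v7m_4, v7m_5, v7m_6, v8m_0, v8m_1, v8m_2, v8m_3, v8m_4,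 v8m_5, v8m_6, v8m_7] <;> ring

noncomputable def gE7 : (Fin 8 → ℝ) → (Fin 8 → ℝ) := fun v => ![(1:ℝ)*v 2, (1:ℝ)*v 3, (1:ℝ)*v 4, (-1:ℝ)*v 1, (-1:ℝ)*v 0, (1:ℝ)*v 5, (1:ℝ)*v 6, (1:ℝ)*v 7]
lemma gE7_spec (v : Fin 8 → ℝ) : sE6 4 (gE6 v) = gE7 v := by
  refine funext8 ?_ ?_ ?_ ?_ ?_ ?_ ?_ ?_ <;>
    simp only [gE7, gE6, sE6, pairing, simpleE6, Fin.sum_univ_eight, Pi.sub_apply, Pi.add_apply, Pi.smul_apply, smul_eq_mul, v5_0, v5_1, v5_2, v5_3, v5_4, v6_0, v6_1, v6_2, v6_3, v6_4, v6_5, v7_0, v7_1, v7_2, v7_3, v7_4, v7_5, v7_6, v8_0, v8_1, v8_2, v8_3, v8_4, v8_5, v8_6, v8_7, v5m_0, v5m_1, v5m_2, v5m_3, v5m_4, v6m_0, v6m_1, v6m_2, v6m_3, v6m_4, v6m_5, v7m_0, v7m_1, v7m_2, v7m_3, v7m_4, v7m_5, v7m_6, v8m_0, v8m_1, v8m_2,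 v8m_3, v8m_4, v8m_5, v8m_6, v8m_7] <;> ring

noncomputable def gE8 : (Fin 8 → ℝ) → (Fin 8 → ℝ) := fun v => ![(-1:ℝ)*v 3, (-1:ℝ)*v 2, (1:ℝ)*v 4, (-1:ℝ)*v 1, (-1:ℝ)*v 0, (1:ℝ)*v 5, (1:ℝ)*v 6, (1:ℝ)*v 7]
lemma gE8_spec (v : Fin 8 → ℝ) : sE6 1 (gE7 v) = gE8 v := by
  refine funext8 ?_ ?_ ?_ ?_ ?_ ?_ ?_ ?_ <;>
    simp only [gE8, gE7, sE6, pairing, simpleE6, Fin.sum_univ_eight, Pi.sub_apply, Pi.add_apply, Pi.smul_apply, smul_eq_mul, v5_0, v5_1, v5_2, v5_3, v5_4, v6_0, v6_1, v6_2, v6_3, v6_4, v6_5, v7_0, v7_1, v7_2, v7_3, v7_4, v7_5, v7_6, v8_0, v8_1, v8_2, v8_3, v8_4, v8_5, v8_6, v8_7, v5m_0, v5m_1, v5m_2, v5m_3, v5m_4, v6m_0, v6m_1, v6m_2, v6m_3, v6m_4, v6m_5, v7m_0, v7m_1, v7m_2, v7m_3, v7m_4, v7m_5, v7m_6, v8m_0,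 v8m_1, v8m_2, v8m_3, v8m_4, v8m_5, v8m_6, v8m_7] <;> ring

noncomputable def gE9 : (Fin 8 → ℝ) → (Fin 8 → ℝ) := fun v => ![(-1:ℝ)*v 3, (1:ℝ)*v 4, (-1:ℝ)*v 2, (-1:ℝ)*v 1, (-1:ℝ)*v 0, (1:ℝ)*v 5, (1:ℝ)*v 6, (1:ℝ)*v 7]
lemma gE9_spec (v : Fin 8 → ℝ) : sE6 3 (gE8 v) = gE9 v := by
  refine funext8 ?_ ?_ ?_ ?_ ?_ ?_ ?_ ?_ <;>
    simp only [gE9, gE8, sE6, pairing, simpleE6, Fin.sum_univ_eight, Pi.sub_apply, Pi.add_apply, Pi.smul_apply, smul_eq_mul, v5_0, v5_1, v5_2, v5_3, v5_4, v6_0, v6_1, v6_2, v6_3, v6_4, v6_5, v7_0, v7_1, v7_2, v7_3, v7_4, v7_5, v7_6, v8_0, v8_1, v8_2, v8_3, v8_4, v8_5, v8_6, v8_7, v5m_0, v5m_1, v5m_2, v5m_3, v5m_4, v6m_0, v6m_1, v6m_2, v6m_3, v6m_4, v6m_5, v7m_0, v7m_1, v7m_2, v7m_3, v7m_4, v7m_5,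 v7m_6, v8m_0, v8m_1, v8m_2, v8m_3, v8m_4, v8m_5, v8m_6, v8m_7] <;> ring

noncomputable def gE10 : (Fin 8 → ℝ) → (Fin 8 → ℝ) := fun v => ![(1:ℝ)*v 4, (-1:ℝ)*v 3, (-1:ℝ)*v 2, (-1:ℝ)*v 1, (-1:ℝ)*v 0, (1:ℝ)*v 5, (1:ℝ)*v 6, (1:ℝ)*v 7]
lemma gE10_spec (v : Fin 8 → ℝ) : sE6 2 (gE9 v) = gE10 v := by
  refine funext8 ?_ ?_ ?_ ?_ ?_ ?_ ?_ ?_ <;>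
    simp only [gE10, gE9, sE6, pairing, simpleE6, Fin.sum_univ_eight, Pi.sub_apply, Pi.add_apply, Pi.smul_apply, smul_eq_mul, v5_0, v5_1, v5_2, v5_3, v5_4, v6_0, v6_1, v6_2, v6_3, v6_4, v6_5, v7_0, v7_1, v7_2, v7_3, v7_4, v7_5, v7_6, v8_0, v8_1, v8_2, v8_3, v8_4, v8_5, v8_6, v8_7, v5m_0, v5m_1, v5m_2, v5m_3, v5m_4, v6m_0, v6m_1, v6m_2, v6m_3, v6m_4, v6m_5, v7m_0, v7m_1, v7m_2, v7m_3, v7m_4, v7m_5, v7m_6, v8m_0, v8m_1, v8m_2, v8m_3, v8m_4, v8m_5, v8m_6, v8m_7] <;> ring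

noncomputable def gE11 : (Fin 8 → ℝ) → (Fin 8 → ℝ) := fun v => ![(-1/4:ℝ)*v 0 + (-1/4:ℝ)*v 1 + (-1/4:ℝ)*v 2 + (-1/4:ℝ)*v 3 + (3/4:ℝ)*v 4 + (1/4:ℝ)*v 5 + (1/4:ℝ)*v 6 + (-1/4:ℝ)*v 7, (1/4:ℝ)*v 0 + (1/4:ℝ)*v 1 + (1/4:ℝ)*v 2 + (-3/4:ℝ)*v 3 + (1/4:ℝ)*v 4 + (-1/4:ℝ)*v 5 + (-1/4:ℝ)*v 6 + (1/4:ℝ)*v 7, (1/4:ℝ)*v 0 + (1/4:ℝ)*v 1 + (-3/4:ℝ)*v 2 + (1/4:ℝ)*v 3 + (1/4:ℝ)*v 4 + (-1/4:ℝ)*v 5 + (-1/4:ℝ)*v 6 + (1/4:ℝ)*v 7, (1/4:ℝ)*v 0 + (-3/4:ℝ)*v 1 + (1/4:ℝ)*v 2 + (1/4:ℝ)*v 3 + (1/4:ℝ)*v 4 + (-1/4:ℝ)*v 5 + (-1/4:ℝ)*v 6 + (1/4:ℝ)*v 7, (-3/4:ℝ)*v 0 + (1/4:ℝ)*v 1 +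 (1/4:ℝ)*v 2 + (1/4:ℝ)*v 3 + (1/4:ℝ)*v 4 + (-1/4:ℝ)*v 5 + (-1/4:ℝ)*v 6 + (1/4:ℝ)*v 7, (1/4:ℝ)*v 0 + (1/4:ℝ)*v 1 + (1/4:ℝ)*v 2 + (1/4:ℝ)*v 3 + (1/4:ℝ)*v 4 + (3/4:ℝ)*v 5 + (-1/4:ℝ)*v 6 + (1/4:ℝ)*v 7, (1/4:ℝ)*v 0 + (1/4:ℝ)*v 1 + (1/4:ℝ)*v 2 + (1/4:ℝ)*v 3 + (1/4:ℝ)*v 4 + (-1/4:ℝ)*v 5 + (3/4:ℝ)*v 6 + (1/4:ℝ)*v 7, (-1/4:ℝ)*v 0 + (-1/4:ℝ)*v 1 + (-1/4:ℝ)*v 2 + (-1/4:ℝ)*v 3 + (-1/4:ℝ)*v 4 + (1/4:ℝ)*v 5 + (1/4:ℝ)*v 6 + (3/4:ℝ)*v 7]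
lemma gE11_spec (v : Fin 8 → ℝ) : sE6 0 (gE10 v) = gE11 v := by
  refine funext8 ?_ ?_ ?_ ?_ ?_ ?_ ?_ ?_ <;>
    simp only [gE11, gE10, sE6, pairing, simpleE6, Fin.sum_univ_eight, Pi.sub_apply, Pi.add_apply, Pi.smul_apply, smul_eq_mul, v5_0, v5_1, v5_2, v5_3, v5_4, v6_0, v6_1, v6_2, v6_3, v6_4, v6_5, v7_0, v7_1, v7_2, v7_3, v7_4, v7_5, v7_6, v8_0, v8_1, v8_2, v8_3, v8_4, v8_5, v8_6, v8_7, v5m_0, v5m_1, v5m_2, v5m_3, v5m_4, v6m_0, v6m_1, v6m_2, v6m_3, v6m_4, v6m_5, v7m_0, v7m_1, v7m_2, v7m_3, v7m_4, v7m_5, v7m_6, v8m_0, v8m_1, v8m_2, v8m_3, v8m_4, v8m_5, v8m_6, v8m_7] <;> ring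

noncomputable def gE12 : (Fin 8 → ℝ) → (Fin 8 → ℝ) := fun v => ![(-1/4:ℝ)*v 0 + (-1/4:ℝ)*v 1 + (-1/4:ℝ)*v 2 + (-1/4:ℝ)*v 3 + (3/4:ℝ)*v 4 + (1/4:ℝ)*v 5 + (1/4:ℝ)*v 6 + (-1/4:ℝ)*v 7, (1/4:ℝ)*v 0 + (1/4:ℝ)*v 1 + (1/4:ℝ)*v 2 + (-3/4:ℝ)*v 3 + (1/4:ℝ)*v 4 + (-1/4:ℝ)*v 5 + (-1/4:ℝ)*v 6 + (1/4:ℝ)*v 7, (1/4:ℝ)*v 0 + (-3/4:ℝ)*v 1 + (1/4:ℝ)*v 2 + (1/4:ℝ)*v 3 + (1/4:ℝ)*v 4 + (-1/4:ℝ)*v 5 + (-1/4:ℝ)*v 6 + (1/4:ℝ)*v 7, (1/4:ℝ)*v 0 + (1/4:ℝ)*v 1 + (-3/4:ℝ)*v 2 + (1/4:ℝ)*v 3 + (1/4:ℝ)*v 4 + (-1/4:ℝ)*v 5 + (-1/4:ℝ)*v 6 + (1/4:ℝ)*v 7, (-3/4:ℝ)*v 0 + (1/4:ℝ)*v 1 +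 (1/4:ℝ)*v 2 + (1/4:ℝ)*v 3 + (1/4:ℝ)*v 4 + (-1/4:ℝ)*v 5 + (-1/4:ℝ)*v 6 + (1/4:ℝ)*v 7, (1/4:ℝ)*v 0 + (1/4:ℝ)*v 1 + (1/4:ℝ)*v 2 + (1/4:ℝ)*v 3 + (1/4:ℝ)*v 4 + (3/4:ℝ)*v 5 + (-1/4:ℝ)*v 6 + (1/4:ℝ)*v 7 + (-2/3:ℝ), (1/4:ℝ)*v 0 + (1/4:ℝ)*v 1 + (1/4:ℝ)*v 2 + (1/4:ℝ)*v 3 + (1/4:ℝ)*v 4 + (-1/4:ℝ)*v 5 + (3/4:ℝ)*v 6 + (1/4:ℝ)*v 7 + (-2/3:ℝ), (-1/4:ℝ)*v 0 + (-1/4:ℝ)*v 1 + (-1/4:ℝ)*v 2 + (-1/4:ℝ)*v 3 + (-1/4:ℝ)*v 4 + (1/4:ℝ)*v 5 + (1/4:ℝ)*v 6 + (3/4:ℝ)*v 7 + (2/3:ℝ)]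
lemma gE12_spec (v : Fin 8 → ℝ) : sE6 4 (muE6 + gE11 v) = gE12 v := by
  refine funext8 ?_ ?_ ?_ ?_ ?_ ?_ ?_ ?_ <;>
    simp only [gE12, gE11, muE6, sE6, pairing, simpleE6, Fin.sum_univ_eight, Pi.sub_apply, Pi.add_apply, Pi.smul_apply, smul_eq_mul, v5_0, v5_1, v5_2, v5_3, v5_4, v6_0, v6_1, v6_2, v6_3, v6_4, v6_5, v7_0, v7_1, v7_2, v7_3, v7_4, v7_5, v7_6, v8_0, v8_1, v8_2, v8_3, v8_4, v8_5, v8_6, v8_7, v5m_0, v5m_1, v5m_2, v5m_3, v5m_4, v6m_0, v6m_1, v6m_2, v6m_3, v6m_4, v6m_5, v7m_0, v7m_1, v7m_2, v7m_3, v7m_4, v7m_5, v7m_6, v8m_0, v8m_1, v8m_2, v8m_3, v8m_4, v8m_5, v8m_6, v8m_7] <;> ring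

noncomputable def gE13 : (Fin 8 → ℝ) → (Fin 8 → ℝ) := fun v => ![(-1/4:ℝ)*v 0 + (-1/4:ℝ)*v 1 + (-1/4:ℝ)*v 2 + (-1/4:ℝ)*v 3 + (3/4:ℝ)*v 4 + (1/4:ℝ)*v 5 + (1/4:ℝ)*v 6 + (-1/4:ℝ)*v 7, (1/4:ℝ)*v 0 + (-3/4:ℝ)*v 1 + (1/4:ℝ)*v 2 + (1/4:ℝ)*v 3 + (1/4:ℝ)*v 4 + (-1/4:ℝ)*v 5 + (-1/4:ℝ)*v 6 + (1/4:ℝ)*v 7, (1/4:ℝ)*v 0 + (1/4:ℝ)*v 1 + (1/4:ℝ)*v 2 + (-3/4:ℝ)*v 3 + (1/4:ℝ)*v 4 + (-1/4:ℝ)*v 5 + (-1/4:ℝ)*v 6 + (1/4:ℝ)*v 7, (1/4:ℝ)*v 0 + (1/4:ℝ)*v 1 + (-3/4:ℝ)*v 2 + (1/4:ℝ)*v 3 + (1/4:ℝ)*v 4 + (-1/4:ℝ)*v 5 + (-1/4:ℝ)*v 6 + (1/4:ℝ)*v 7, (-3/4:ℝ)*v 0 + (1/4:ℝ)*v 1 +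 (1/4:ℝ)*v 2 + (1/4:ℝ)*v 3 + (1/4:ℝ)*v 4 + (-1/4:ℝ)*v 5 + (-1/4:ℝ)*v 6 + (1/4:ℝ)*v 7, (1/4:ℝ)*v 0 + (1/4:ℝ)*v 1 + (1/4:ℝ)*v 2 + (1/4:ℝ)*v 3 + (1/4:ℝ)*v 4 + (3/4:ℝ)*v 5 + (-1/4:ℝ)*v 6 + (1/4:ℝ)*v 7 + (-2/3:ℝ), (1/4:ℝ)*v 0 + (1/4:ℝ)*v 1 + (1/4:ℝ)*v 2 + (1/4:ℝ)*v 3 + (1/4:ℝ)*v 4 + (-1/4:ℝ)*v 5 + (3/4:ℝ)*v 6 + (1/4:ℝ)*v 7 + (-2/3:ℝ), (-1/4:ℝ)*v 0 + (-1/4:ℝ)*v 1 + (-1/4:ℝ)*v 2 + (-1/4:ℝ)*v 3 + (-1/4:ℝ)*v 4 + (1/4:ℝ)*v 5 + (1/4:ℝ)*v 6 + (3/4:ℝ)*v 7 + (2/3:ℝ)]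
lemma gE13_spec (v : Fin 8 → ℝ) : sE6 3 (gE12 v) = gE13 v := by
  refine funext8 ?_ ?_ ?_ ?_ ?_ ?_ ?_ ?_ <;>
    simp only [gE13, gE12, sE6, pairing, simpleE6, Fin.sum_univ_eight, Pi.sub_apply, Pi.add_apply, Pi.smul_apply, smul_eq_mul, v5_0, v5_1, v5_2, v5_3, v5_4, v6_0, v6_1, v6_2, v6_3, v6_4, v6_5, v7_0, v7_1, v7_2, v7_3, v7_4, v7_5, v7_6, v8_0, v8_1, v8_2, v8_3, v8_4, v8_5, v8_6, v8_7, v5m_0, v5m_1, v5m_2, v5m_3, v5m_4, v6m_0, v6m_1, v6m_2, v6m_3, v6m_4, v6m_5, v7m_0, v7m_1, v7m_2, v7m_3, v7m_4, v7m_5, v7m_6, v8m_0, v8m_1, v8m_2, v8m_3, v8m_4, v8m_5, v8m_6, v8m_7] <;> ring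

noncomputable def gE14 : (Fin 8 → ℝ) → (Fin 8 → ℝ) := fun v => ![(-1/4:ℝ)*v 0 + (3/4:ℝ)*v 1 + (-1/4:ℝ)*v 2 + (-1/4:ℝ)*v 3 + (-1/4:ℝ)*v 4 + (1/4:ℝ)*v 5 + (1/4:ℝ)*v 6 + (-1/4:ℝ)*v 7, (1/4:ℝ)*v 0 + (1/4:ℝ)*v 1 + (1/4:ℝ)*v 2 + (1/4:ℝ)*v 3 + (-3/4:ℝ)*v 4 + (-1/4:ℝ)*v 5 + (-1/4:ℝ)*v 6 + (1/4:ℝ)*v 7, (1/4:ℝ)*v 0 + (1/4:ℝ)*v 1 + (1/4:ℝ)*v 2 + (-3/4:ℝ)*v 3 + (1/4:ℝ)*v 4 + (-1/4:ℝ)*v 5 + (-1/4:ℝ)*v 6 + (1/4:ℝ)*v 7, (1/4:ℝ)*v 0 + (1/4:ℝ)*v 1 + (-3/4:ℝ)*v 2 + (1/4:ℝ)*v 3 + (1/4:ℝ)*v 4 + (-1/4:ℝ)*v 5 + (-1/4:ℝ)*v 6 + (1/4:ℝ)*v 7, (-3/4:ℝ)*v 0 + (1/4:ℝ)*v 1 +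 (1/4:ℝ)*v 2 + (1/4:ℝ)*v 3 + (1/4:ℝ)*v 4 + (-1/4:ℝ)*v 5 + (-1/4:ℝ)*v 6 + (1/4:ℝ)*v 7, (1/4:ℝ)*v 0 + (1/4:ℝ)*v 1 + (1/4:ℝ)*v 2 + (1/4:ℝ)*v 3 + (1/4:ℝ)*v 4 + (3/4:ℝ)*v 5 + (-1/4:ℝ)*v 6 + (1/4:ℝ)*v 7 + (-2/3:ℝ), (1/4:ℝ)*v 0 + (1/4:ℝ)*v 1 + (1/4:ℝ)*v 2 + (1/4:ℝ)*v 3 + (1/4:ℝ)*v 4 + (-1/4:ℝ)*v 5 + (3/4:ℝ)*v 6 + (1/4:ℝ)*v 7 + (-2/3:ℝ), (-1/4:ℝ)*v 0 + (-1/4:ℝ)*v 1 + (-1/4:ℝ)*v 2 + (-1/4:ℝ)*v 3 + (-1/4:ℝ)*v 4 + (1/4:ℝ)*v 5 + (1/4:ℝ)*v 6 + (3/4:ℝ)*v 7 + (2/3:ℝ)]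
lemma gE14_spec (v : Fin 8 → ℝ) : sE6 1 (gE13 v) = gE14 v := by
  refine funext8 ?_ ?_ ?_ ?_ ?_ ?_ ?_ ?_ <;>
    simp only [gE14, gE13, sE6, pairing, simpleE6, Fin.sum_univ_eight, Pi.sub_apply, Pi.add_apply, Pi.smul_apply, smul_eq_mul, v5_0, v5_1, v5_2, v5_3, v5_4, v6_0, v6_1, v6_2, v6_3, v6_4, v6_5, v7_0, v7_1, v7_2, v7_3, v7_4, v7_5, v7_6, v8_0, v8_1, v8_2, v8_3, v8_4, v8_5, v8_6, v8_7, v5m_0, v5m_1, v5m_2, v5m_3, v5m_4, v6m_0, v6m_1, v6m_2, v6m_3, v6m_4, v6m_5, v7m_0, v7m_1, v7m_2, v7m_3, v7m_4, v7m_5, v7m_6, v8m_0, v8m_1, v8m_2, v8m_3, v8m_4, v8m_5, v8m_6, v8m_7] <;> ring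

noncomputable def gE15 : (Fin 8 → ℝ) → (Fin 8 → ℝ) := fun v => ![(-1/4:ℝ)*v 0 + (3/4:ℝ)*v 1 + (-1/4:ℝ)*v 2 + (-1/4:ℝ)*v 3 + (-1/4:ℝ)*v 4 + (1/4:ℝ)*v 5 + (1/4:ℝ)*v 6 + (-1/4:ℝ)*v 7, (1/4:ℝ)*v 0 + (1/4:ℝ)*v 1 + (1/4:ℝ)*v 2 + (1/4:ℝ)*v 3 + (-3/4:ℝ)*v 4 + (-1/4:ℝ)*v 5 + (-1/4:ℝ)*v 6 + (1/4:ℝ)*v 7, (1/4:ℝ)*v 0 + (1/4:ℝ)*v 1 + (1/4:ℝ)*v 2 + (-3/4:ℝ)*v 3 + (1/4:ℝ)*v 4 + (-1/4:ℝ)*v 5 + (-1/4:ℝ)*v 6 + (1/4:ℝ)*v 7, (-3/4:ℝ)*v 0 + (1/4:ℝ)*v 1 + (1/4:ℝ)*v 2 + (1/4:ℝ)*v 3 + (1/4:ℝ)*v 4 + (-1/4:ℝ)*v 5 + (-1/4:ℝ)*v 6 + (1/4:ℝ)*v 7, (1/4:ℝ)*v 0 + (1/4:ℝ)*v 1 +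 (-3/4:ℝ)*v 2 + (1/4:ℝ)*v 3 + (1/4:ℝ)*v 4 + (-1/4:ℝ)*v 5 + (-1/4:ℝ)*v 6 + (1/4:ℝ)*v 7, (1/4:ℝ)*v 0 + (1/4:ℝ)*v 1 + (1/4:ℝ)*v 2 + (1/4:ℝ)*v 3 + (1/4:ℝ)*v 4 + (3/4:ℝ)*v 5 + (-1/4:ℝ)*v 6 + (1/4:ℝ)*v 7 + (-2/3:ℝ), (1/4:ℝ)*v 0 + (1/4:ℝ)*v 1 + (1/4:ℝ)*v 2 + (1/4:ℝ)*v 3 + (1/4:ℝ)*v 4 + (-1/4:ℝ)*v 5 + (3/4:ℝ)*v 6 + (1/4:ℝ)*v 7 + (-2/3:ℝ), (-1/4:ℝ)*v 0 + (-1/4:ℝ)*v 1 + (-1/4:ℝ)*v 2 + (-1/4:ℝ)*v 3 + (-1/4:ℝ)*v 4 + (1/4:ℝ)*v 5 + (1/4:ℝ)*v 6 + (3/4:ℝ)*v 7 + (2/3:ℝ)]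
lemma gE15_spec (v : Fin 8 → ℝ) : sE6 5 (gE14 v) = gE15 v := by
  refine funext8 ?_ ?_ ?_ ?_ ?_ ?_ ?_ ?_ <;>
    simp only [gE15, gE14, sE6, pairing, simpleE6, Fin.sum_univ_eight, Pi.sub_apply, Pi.add_apply, Pi.smul_apply, smul_eq_mul, v5_0, v5_1, v5_2, v5_3, v5_4, v6_0, v6_1, v6_2, v6_3, v6_4, v6_5, v7_0, v7_1, v7_2, v7_3, v7_4, v7_5, v7_6, v8_0, v8_1, v8_2, v8_3, v8_4, v8_5, v8_6, v8_7, v5m_0, v5m_1, v5m_2, v5m_3, v5m_4, v6m_0, v6m_1, v6m_2, v6m_3, v6m_4, v6m_5, v7m_0, v7m_1, v7m_2, v7m_3, v7m_4, v7m_5, v7m_6, v8m_0, v8m_1, v8m_2, v8m_3, v8m_4, v8m_5, v8m_6, v8m_7] <;> ring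

noncomputable def gE16 : (Fin 8 → ℝ) → (Fin 8 → ℝ) := fun v => ![(-1/4:ℝ)*v 0 + (3/4:ℝ)*v 1 + (-1/4:ℝ)*v 2 + (-1/4:ℝ)*v 3 + (-1/4:ℝ)*v 4 + (1/4:ℝ)*v 5 + (1/4:ℝ)*v 6 + (-1/4:ℝ)*v 7, (1/4:ℝ)*v 0 + (1/4:ℝ)*v 1 + (1/4:ℝ)*v 2 + (1/4:ℝ)*v 3 + (-3/4:ℝ)*v 4 + (-1/4:ℝ)*v 5 + (-1/4:ℝ)*v 6 + (1/4:ℝ)*v 7, (-3/4:ℝ)*v 0 + (1/4:ℝ)*v 1 + (1/4:ℝ)*v 2 + (1/4:ℝ)*v 3 + (1/4:ℝ)*v 4 + (-1/4:ℝ)*v 5 + (-1/4:ℝ)*v 6 + (1/4:ℝ)*v 7, (1/4:ℝ)*v 0 + (1/4:ℝ)*v 1 + (1/4:ℝ)*v 2 + (-3/4:ℝ)*v 3 + (1/4:ℝ)*v 4 + (-1/4:ℝ)*v 5 + (-1/4:ℝ)*v 6 + (1/4:ℝ)*v 7, (1/4:ℝ)*v 0 + (1/4:ℝ)*v 1 +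 (-3/4:ℝ)*v 2 + (1/4:ℝ)*v 3 + (1/4:ℝ)*v 4 + (-1/4:ℝ)*v 5 + (-1/4:ℝ)*v 6 + (1/4:ℝ)*v 7, (1/4:ℝ)*v 0 + (1/4:ℝ)*v 1 + (1/4:ℝ)*v 2 + (1/4:ℝ)*v 3 + (1/4:ℝ)*v 4 + (3/4:ℝ)*v 5 + (-1/4:ℝ)*v 6 + (1/4:ℝ)*v 7 + (-2/3:ℝ), (1/4:ℝ)*v 0 + (1/4:ℝ)*v 1 + (1/4:ℝ)*v 2 + (1/4:ℝ)*v 3 + (1/4:ℝ)*v 4 + (-1/4:ℝ)*v 5 + (3/4:ℝ)*v 6 + (1/4:ℝ)*v 7 + (-2/3:ℝ), (-1/4:ℝ)*v 0 + (-1/4:ℝ)*v 1 + (-1/4:ℝ)*v 2 + (-1/4:ℝ)*v 3 + (-1/4:ℝ)*v 4 + (1/4:ℝ)*v 5 + (1/4:ℝ)*v 6 + (3/4:ℝ)*v 7 + (2/3:ℝ)]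
lemma gE16_spec (v : Fin 8 → ℝ) : sE6 4 (gE15 v) = gE16 v := by
  refine funext8 ?_ ?_ ?_ ?_ ?_ ?_ ?_ ?_ <;>
    simp only [gE16, gE15, sE6, pairing, simpleE6, Fin.sum_univ_eight, Pi.sub_apply, Pi.add_apply, Pi.smul_apply, smul_eq_mul, v5_0, v5_1, v5_2, v5_3, v5_4, v6_0, v6_1, v6_2, v6_3, v6_4, v6_5, v7_0, v7_1, v7_2, v7_3, v7_4, v7_5, v7_6, v8_0, v8_1, v8_2, v8_3, v8_4, v8_5, v8_6, v8_7, v5m_0, v5m_1, v5m_2, v5m_3, v5m_4, v6m_0, v6m_1, v6m_2, v6m_3, v6m_4, v6m_5, v7m_0, v7m_1, v7m_2, v7m_3, v7m_4, v7m_5, v7m_6, v8m_0, v8m_1, v8m_2, v8m_3, v8m_4, v8m_5, v8m_6, v8m_7] <;> ring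

noncomputable def gE17 : (Fin 8 → ℝ) → (Fin 8 → ℝ) := fun v => ![(-1/4:ℝ)*v 0 + (3/4:ℝ)*v 1 + (-1/4:ℝ)*v 2 + (-1/4:ℝ)*v 3 + (-1/4:ℝ)*v 4 + (1/4:ℝ)*v 5 + (1/4:ℝ)*v 6 + (-1/4:ℝ)*v 7, (-3/4:ℝ)*v 0 + (1/4:ℝ)*v 1 + (1/4:ℝ)*v 2 + (1/4:ℝ)*v 3 + (1/4:ℝ)*v 4 + (-1/4:ℝ)*v 5 + (-1/4:ℝ)*v 6 + (1/4:ℝ)*v 7, (1/4:ℝ)*v 0 + (1/4:ℝ)*v 1 + (1/4:ℝ)*v 2 + (1/4:ℝ)*v 3 + (-3/4:ℝ)*v 4 + (-1/4:ℝ)*v 5 + (-1/4:ℝ)*v 6 + (1/4:ℝ)*v 7, (1/4:ℝ)*v 0 + (1/4:ℝ)*v 1 + (1/4:ℝ)*v 2 + (-3/4:ℝ)*v 3 + (1/4:ℝ)*v 4 + (-1/4:ℝ)*v 5 + (-1/4:ℝ)*v 6 + (1/4:ℝ)*v 7, (1/4:ℝ)*v 0 + (1/4:ℝ)*v 1 +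 (-3/4:ℝ)*v 2 + (1/4:ℝ)*v 3 + (1/4:ℝ)*v 4 + (-1/4:ℝ)*v 5 + (-1/4:ℝ)*v 6 + (1/4:ℝ)*v 7, (1/4:ℝ)*v 0 + (1/4:ℝ)*v 1 + (1/4:ℝ)*v 2 + (1/4:ℝ)*v 3 + (1/4:ℝ)*v 4 + (3/4:ℝ)*v 5 + (-1/4:ℝ)*v 6 + (1/4:ℝ)*v 7 + (-2/3:ℝ), (1/4:ℝ)*v 0 + (1/4:ℝ)*v 1 + (1/4:ℝ)*v 2 + (1/4:ℝ)*v 3 + (1/4:ℝ)*v 4 + (-1/4:ℝ)*v 5 + (3/4:ℝ)*v 6 + (1/4:ℝ)*v 7 + (-2/3:ℝ), (-1/4:ℝ)*v 0 + (-1/4:ℝ)*v 1 + (-1/4:ℝ)*v 2 + (-1/4:ℝ)*v 3 + (-1/4:ℝ)*v 4 + (1/4:ℝ)*v 5 + (1/4:ℝ)*v 6 + (3/4:ℝ)*v 7 + (2/3:ℝ)]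
lemma gE17_spec (v : Fin 8 → ℝ) : sE6 3 (gE16 v) = gE17 v := by
  refine funext8 ?_ ?_ ?_ ?_ ?_ ?_ ?_ ?_ <;>
    simp only [gE17, gE16, sE6, pairing, simpleE6, Fin.sum_univ_eight, Pi.sub_apply, Pi.add_apply, Pi.smul_apply, smul_eq_mul, v5_0, v5_1, v5_2, v5_3, v5_4, v6_0, v6_1, v6_2, v6_3, v6_4, v6_5, v7_0, v7_1, v7_2, v7_3, v7_4, v7_5, v7_6, v8_0, v8_1, v8_2, v8_3, v8_4, v8_5, v8_6, v8_7, v5m_0, v5m_1, v5m_2, v5m_3, v5m_4, v6m_0, v6m_1, v6m_2, v6m_3, v6m_4, v6m_5, v7m_0, v7m_1, v7m_2, v7m_3, v7m_4, v7m_5, v7m_6, v8m_0, v8m_1, v8m_2, v8m_3, v8m_4, v8m_5, v8m_6, v8m_7] <;> ring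

lemma xformE6 (v : Fin 8 → ℝ) : w2E6 (muE6 + w1revE6 v) = gE17 v := by
  simp only [w2E6, w1revE6, Function.comp_apply]
  rw [gE1_spec v, gE2_spec v, gE3_spec v, gE4_spec v, gE5_spec v, gE6_spec v, gE7_spec v,
    gE8_spec v, gE9_spec v, gE10_spec v, gE11_spec v, gE12_spec v, gE13_spec v, gE14_spec v,
    gE15_spec v, gE16_spec v, gE17_spec v]

noncomputable def zE6 : Fin 7 → (Fin 8 → ℝ) :=
  ![muE6,
    ![-(1/2), 1/2, 1/2, 1/2, 1/2, -(1/6), -(1/6), 1/6],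
    ![-(1/2), -(1/2), 1/2, 1/2, -(1/2), -(1/6), -(1/6), 1/6],
    ![-(1/2), 1/2, -(1/2), -(1/2), 1/2, -(1/6), -(1/6), 1/6],
    ![1/2, 1/2, -(1/2), -(1/2), -(1/2), -(1/6), -(1/6), 1/6],
    ![-(1/2), 1/2, -(1/2), 1/2, -(1/2), -(1/6), -(1/6), 1/6],
    ![-(1/2), 1/2, 1/2, -(1/2), -(1/2), -(1/6), -(1/6), 1/6]]

lemma delta_mem (δ : Fin 5 → Bool)
    (h : Even (Finset.filter (fun i => δ i = true) Finset.univ).card)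
    (w : Fin 8 → ℝ)
    (hw : w = fun k : Fin 8 =>
      if hk : (k : ℕ) < 5 then -(1/2) * (if δ ⟨k, hk⟩ then -1 else 1)
      else if (k : ℕ) = 7 then 1/6 else -(1/6)) : w ∈ OE6 :=
  Or.inl (Or.inr ⟨δ, h, hw⟩)

lemma zE6_mem (i : Fin 7) : zE6 i ∈ OE6 := by
  fin_cases i
  · exact Or.inl (Or.inl rfl)
  · refine delta_mem ![false, true, true, true, true] (by decide) _ ?_
    funext k
    fin_cases k <;> norm_num [zE6]
  · refine delta_mem ![false, false, true, true, false] (by decide) _ ?_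
    funext k
    fin_cases k <;> norm_num [zE6]
  · refine delta_mem ![false, true, false, false, true] (by decide) _ ?_
    funext k
    fin_cases k <;> norm_num [zE6]
  · refine delta_mem ![true, true, false, false, false] (by decide) _ ?_
    funext k
    fin_cases k <;> norm_num [zE6]
  · refine delta_mem ![false, true, false, true, false] (by decide) _ ?_
    funext k
    fin_cases k <;> norm_num [zE6]
  · refine delta_mem ![false, true, true, false, false] (by decide) _ ?_
    funext k
    fin_cases k <;> norm_num [zE6]

noncomputable def wtE6 (v : Fin 8 → ℝ) : Fin 7 → ℝ :=
  ![1 - pairing highestE6 v,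
    pairing (simpleE6 0) v + pairing (simpleE6 2) v,
    pairing (simpleE6 1) v,
    pairing (simpleE6 1) v + pairing (simpleE6 3) v + pairing (simpleE6 4) v,
    pairing (simpleE6 2) v,
    pairing (simpleE6 3) v + pairing (simpleE6 5) v,
    pairing (simpleE6 3) v + pairing (simpleE6 4) v]


/-- μ-permissibility condition for x: for every v in the closed base alcove C,
x(v) − v ∈ P_μ = conv(O), where x(v) = w₂(μ + w₁⁻¹(v)).
The inverse w₁⁻¹ is quantified as any two-sided inverse of w₁. -/

theorem E6_x_permissible (w1inv : (Fin 8 → ℝ) → (Fin 8 → ℝ))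
    (h₁ : Function.LeftInverse w1inv w1E6) (h₂ : Function.RightInverse w1inv w1E6) :
    ∀ v ∈ alcoveE6, w2E6 (muE6 + w1inv v) - v ∈ convexHull ℝ OE6 := by
  intro v hv
  obtain ⟨⟨hv56, hv67⟩, hs, hh⟩ := hv
  have h5 : v 5 = -v 7 := by rw [hv56, hv67]
  have h6 : v 6 = -v 7 := hv67
  have hinv : w1inv v = w1revE6 v := by
    conv_lhs => rw [← w1_rightinv v]
    exact h₁ _
  rw [hinv, xformE6]
  have key : gE17 v - v = ∑ i : Fin 7, wtE6 v i • zE6 i := by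
    refine funext8 ?_ ?_ ?_ ?_ ?_ ?_ ?_ ?_ <;>
      simp only [gE17, wtE6, zE6, muE6, pairing, highestE6, simpleE6, Fin.sum_univ_seven,
        Fin.sum_univ_eight, Finset.sum_apply, Pi.sub_apply, Pi.add_apply, Pi.smul_apply,
        smul_eq_mul, v5_0, v5_1, v5_2, v5_3, v5_4, v6_0, v6_1, v6_2, v6_3, v6_4, v6_5, v7_0, v7_1, v7_2, v7_3, v7_4, v7_5, v7_6, v8_0, v8_1, v8_2, v8_3, v8_4, v8_5, v8_6, v8_7, v5m_0, v5m_1, v5m_2, v5m_3, v5m_4, v6m_0, v6m_1, v6m_2, v6m_3, v6m_4, v6m_5, v7m_0, v7m_1, v7m_2, v7m_3, v7m_4, v7m_5, v7m_6, v8m_0, v8m_1, v8m_2, v8m_3, v8m_4, v8m_5, v8m_6, v8m_7, h5, h6] <;> ring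
  rw [key]
  refine (convex_convexHull ℝ OE6).sum_mem ?_ ?_ (fun i _ => subset_convexHull ℝ _ (zE6_mem i))
  · intro i _
    fin_cases i <;>
      · simp only [wtE6, v5_0, v5_1, v5_2, v5_3, v5_4, v6_0, v6_1, v6_2, v6_3, v6_4, v6_5, v7_0, v7_1, v7_2, v7_3, v7_4, v7_5, v7_6, v8_0, v8_1, v8_2, v8_3, v8_4, v8_5, v8_6, v8_7, v5m_0, v5m_1, v5m_2, v5m_3, v5m_4, v6m_0, v6m_1, v6m_2, v6m_3, v6m_4, v6m_5, v7m_0, v7m_1, v7m_2, v7m_3, v7m_4, v7m_5, v7m_6, v8m_0, v8m_1, v8m_2, v8m_3, v8m_4, v8m_5, v8m_6, v8m_7]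
        linarith [hs 0, hs 1, hs 2, hs 3, hs 4, hs 5, hh]
  · simp only [Fin.sum_univ_seven, wtE6, pairing, highestE6, simpleE6, Fin.sum_univ_eight,
      Pi.add_apply, Pi.smul_apply, smul_eq_mul, v5_0, v5_1, v5_2, v5_3, v5_4, v6_0, v6_1, v6_2, v6_3, v6_4, v6_5, v7_0, v7_1, v7_2, v7_3, v7_4, v7_5, v7_6, v8_0, v8_1, v8_2, v8_3, v8_4, v8_5, v8_6, v8_7, v5m_0, v5m_1, v5m_2, v5m_3, v5m_4, v6m_0, v6m_1, v6m_2, v6m_3, v6m_4, v6m_5, v7m_0, v7m_1, v7m_2, v7m_3, v7m_4, v7m_5, v7m_6, v8m_0, v8m_1, v8m_2, v8m_3, v8m_4, v8m_5, v8m_6, v8m_7]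
    ring
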